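/- Let Λ be a square domain, β > 0, x > 0, A ⊆ Λ nonempty, and let h₁, h₂ : ∂Λ → ℤ with h₁(j) ≤ h₂(j) for all j ∈ ∂Λ. Then P^IV_{β,Λ,h₁}( max_{j∈A} m_j ≥ x ) ≤ P^IV_{β,Λ,h₂}( max_{j∈A} m_j ≥ x ) and P^IV_{β,Λ,h₁}( min_{j∈A} m_j ≥ −x ) ≤ P^IV_{β,Λ,h₂}( min_{j∈A} m_j ≥ −x ). -/

import Mathlib

open scoped BigOperators
open MeasureTheory

noncomputable section

namespace IVGFF

attribute [local instance] Classical.propDecidable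

/-- Vertices of the square lattice. -/
abbrev V : Type := ℤ × ℤ

/-- The square box with corner `c` and side-length `L`. -/
def box (c : V) (L : ℕ) : Finset V :=
  (Finset.Icc c.1 (c.1 + (L : ℤ) - 1)) ×ˢ (Finset.Icc c.2 (c.2 + (L : ℤ) - 1))

/-- The boundary of the box with corner `c` and side-length `L`. -/
def bdry (c : V) (L : ℕ) : Finset V :=
  (box c L).filter fun j =>
    j.1 = c.1 ∨ j.1 = c.1 + (L : ℤ) - 1 ∨ j.2 = c.2 ∨ j.2 = c.2 + (L : ℤ) - 1

/-- The interior of the box with corner `c` and side-length `L`. -/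
def intr (c : V) (L : ℕ) : Finset V := box c L \ bdry c L

/-- Adjacency in the square lattice: `ℓ¹`-distance one. -/
def adj (j l : V) : Prop := |j.1 - l.1| + |j.2 - l.2| = 1

/-- The edges of the box (each edge appearing once, in a fixed orientation). -/
def edges (c : V) (L : ℕ) : Finset (V × V) :=
  ((box c L) ×ˢ (box c L)).filter fun p =>
    adj p.1 p.2 ∧ (p.1.1 < p.2.1 ∨ (p.1.1 = p.2.1 ∧ p.1.2 < p.2.2))

/-- Graph distance in the box graph, which coincides with `ℓ¹`-distance. -/
def gdist (j l : V) : ℕ := (|j.1 - l.1| + |j.2 - l.2|).toNat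

/-- Distance between two finite sets of vertices. -/
def distFS (A B : Finset V) : ℕ := sInf {n : ℕ | ∃ j ∈ A, ∃ l ∈ B, gdist j l = n}

/-- Inner product `⟨f, g⟩ = Σ_{j ∈ Λ} f_j g_j` of real fields. -/
def dot (c : V) (L : ℕ) (f g : V → ℝ) : ℝ := ∑ j ∈ box c L, f j * g j

/-- Inner product of an integer field with a real field. -/
def dotI (c : V) (L : ℕ) (m : V → ℤ) (f : V → ℝ) : ℝ := ∑ j ∈ box c L, (m j : ℝ) * f j

/-- The graph Laplacian `(Δ_Λ f)_j = Σ_{l ∼ j} (f_l − f_j)`. -/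
def lap (c : V) (L : ℕ) (f : V → ℝ) : V → ℝ :=
  fun j => ∑ l ∈ (box c L).filter (fun l => adj j l), (f l - f j)

/-- Dirichlet energy `Σ_{j∼l} (g_j − g_l)²` for integer fields. -/
def energyI (c : V) (L : ℕ) (g : V → ℤ) : ℝ :=
  ∑ p ∈ edges c L, ((g p.1 : ℝ) - (g p.2 : ℝ)) ^ 2

/-- Dirichlet energy `Σ_{j∼l} (φ_j − φ_l)²` for real fields. -/
def energyR (c : V) (L : ℕ) (φ : V → ℝ) : ℝ :=
  ∑ p ∈ edges c L, (φ p.1 - φ p.2) ^ 2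

/-- Integer-valued configurations with boundary condition `h` (extended by `0` off the box). -/
def ivConfigs (c : V) (L : ℕ) (h : V → ℤ) : Set (V → ℤ) :=
  {g | (∀ j ∈ bdry c L, g j = h j) ∧ ∀ j, j ∉ box c L → g j = 0}

/-- The IV-GFF Boltzmann weight. -/
def ivWeight (c : V) (L : ℕ) (β : ℝ) (g : V → ℤ) : ℝ :=
  Real.exp (-(β / 2) * energyI c L g)

/-- Partition function of the IV-GFF. -/
def ivZ (c : V) (L : ℕ) (β : ℝ) (h : V → ℤ) : ℝ :=
  ∑' g : ↥(ivConfigs c L h), ivWeight c L β g.1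

/-- Probability of an event under the IV-GFF `P^IV_{β,Λ,h}`. -/
def ivProb (c : V) (L : ℕ) (β : ℝ) (h : V → ℤ) (A : Set (V → ℤ)) : ℝ :=
  (∑' g : ↥(ivConfigs c L h ∩ A), ivWeight c L β g.1) / ivZ c L β h

/-- Expectation under the IV-GFF `E^IV_{β,Λ,h}`. -/
def ivExp (c : V) (L : ℕ) (β : ℝ) (h : V → ℤ) (F : (V → ℤ) → ℝ) : ℝ :=
  (∑' g : ↥(ivConfigs c L h), ivWeight c L β g.1 * F g.1) / ivZ c L β h

/-- Probability under the symmetrized IV-GFF `P^{IV-Sym}_{β,Λ,h}`. -/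
def ivSymProb (c : V) (L : ℕ) (β : ℝ) (h : V → ℤ) (A : Set (V → ℤ)) : ℝ :=
  (ivProb c L β h A + ivProb c L β (fun j => -h j) A) / 2

/-- Expectation under the symmetrized IV-GFF `E^{IV-Sym}_{β,Λ,h}`. -/
def ivSymExp (c : V) (L : ℕ) (β : ℝ) (h : V → ℤ) (F : (V → ℤ) → ℝ) : ℝ :=
  (ivExp c L β h F + ivExp c L β (fun j => -h j) F) / 2

/-- Extension of interior values `x` by boundary values `h` (and by `0` off the box). -/
def extend (c : V) (L : ℕ) (h : V → ℝ) (x : ↥(intr c L) → ℝ) : V → ℝ :=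
  fun j => if hj : j ∈ intr c L then x ⟨j, hj⟩ else if j ∈ bdry c L then h j else 0

/-- Partition function of the (real-valued) GFF. -/
def gffZ (c : V) (L : ℕ) (β : ℝ) (h : V → ℝ) : ℝ :=
  ∫ x : ↥(intr c L) → ℝ, Real.exp (-(β / 2) * energyR c L (extend c L h x))

/-- Expectation under the GFF `E^GFF_{β,Λ,h}`. -/
def gffExp (c : V) (L : ℕ) (β : ℝ) (h : V → ℝ) (F : (V → ℝ) → ℝ) : ℝ :=
  (∫ x : ↥(intr c L) → ℝ,
      F (extend c L h x) * Real.exp (-(β / 2) * energyR c L (extend c L h x))) / gffZ c L β h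

/-- Expectation under the symmetrized GFF `E^{GFF-Sym}_{β,Λ,h}`. -/
def gffSymExp (c : V) (L : ℕ) (β : ℝ) (h : V → ℝ) (F : (V → ℝ) → ℝ) : ℝ :=
  (gffExp c L β h F + gffExp c L β (fun j => -h j) F) / 2

/-- Complex-valued expectation under the GFF. -/
def gffExpC (c : V) (L : ℕ) (β : ℝ) (h : V → ℝ) (F : (V → ℝ) → ℂ) : ℂ :=
  (∫ x : ↥(intr c L) → ℝ,
      F (extend c L h x) * (Real.exp (-(β / 2) * energyR c L (extend c L h x)) : ℂ)) /
    (gffZ c L β h : ℂ)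

/-- One-step transition kernel of the simple random walk on the box, killed at the boundary:
rate `1/4` from an interior vertex to each neighbour. -/
def rwKernel (c : V) (L : ℕ) (j k : V) : ℝ :=
  if j ∈ intr c L ∧ adj j k then 1 / 4 else 0

/-- `n`-step transition probabilities of the killed walk. -/
def rwIter (c : V) (L : ℕ) : ℕ → V → V → ℝ
  | 0 => fun j k => if j = k then 1 else 0
  | n + 1 => fun j k => ∑ m ∈ box c L, rwIter c L n j m * rwKernel c L m k

/-- The Green's function `G_Λ(j,l)`: expected occupation time of `l` (for `l` interior) by the
continuous-time simple random walk started at `j` and killed at `∂Λ`; each interior holding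
time has expectation `1/4`. -/
def green (c : V) (L : ℕ) (j l : V) : ℝ := (1 / 4) * ∑' n : ℕ, rwIter c L n j l

/-- The harmonic measure `Hm_Λ(j,l)`: for `l ∈ ∂Λ`, the probability that the walk started
at `j` first hits the boundary at `l`. -/
def harmMeas (c : V) (L : ℕ) (j l : V) : ℝ := ∑' n : ℕ, rwIter c L n j l

/-- A real, even, normalized trigonometric polynomial
`λ(x) = 1 + 2 Σ_{q=1}^N λ̂_q cos(qx)` with coefficients `coef` and degree `N`. -/
def trigPoly (coef : ℕ → ℝ) (N : ℕ) (x : ℝ) : ℝ :=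
  1 + 2 * ∑ q ∈ Finset.Icc 1 N, coef q * Real.cos ((q : ℝ) * x)

/-- `(Γ,η,θ)`-sub-Gaussian coefficients (at inverse temperature `β`). -/
def subGaussian (β Γ η θ : ℝ) (coef : ℕ → ℝ) : Prop :=
  ∀ q : ℕ, 1 ≤ q → |coef q| ≤ Γ * Real.exp ((η + θ / β) * (q : ℝ) ^ 2)

/-- The Fejér kernel `F_N(x) = 1 + Σ_{q=1}^{N−1} 2(1 − q/N) cos(qx)`. -/
def fejer (N : ℕ) (x : ℝ) : ℝ :=
  1 + ∑ q ∈ Finset.Icc 1 (N - 1), 2 * (1 - (q : ℝ) / (N : ℝ)) * Real.cos ((q : ℝ) * x)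

/-- The (finite) support of a charge density within the box. -/
def suppF (c : V) (L : ℕ) (ρ : V → ℤ) : Finset V := (box c L).filter fun j => ρ j ≠ 0

/-- `ρ` is a charge density on the box: nonempty support contained in the interior. -/
def IsDensity (c : V) (L : ℕ) (ρ : V → ℤ) : Prop :=
  (∃ j, ρ j ≠ 0) ∧ ∀ j, ρ j ≠ 0 → j ∈ intr c L

/-- The total charge `Q(ρ)`. -/
def Qcharge (c : V) (L : ℕ) (ρ : V → ℤ) : ℤ := ∑ j ∈ box c L, ρ j

/-- Diameter of a finite set of vertices in graph distance. -/
def diamF (s : Finset V) : ℕ := s.sup fun j => s.sup fun l => gdist j l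

/-- The modified diameter `d_Λ(ρ)`. -/
def dLam (c : V) (L : ℕ) (ρ : V → ℤ) : ℕ :=
  if Qcharge c L ρ ≠ 0 then
    max (diamF (suppF c L ρ)) (distFS (suppF c L ρ) (bdry c L))
  else diamF (suppF c L ρ)

/-- `‖ρ‖₂² = Σ_j ρ_j²`. -/
def norm2sq (c : V) (L : ℕ) (ρ : V → ℤ) : ℝ := ∑ j ∈ box c L, ((ρ j : ℝ)) ^ 2

/-- The `2^k × 2^k` square with corner `a`, intersected with the box. -/
def sqAt (c : V) (L k : ℕ) (a : V) : Finset V :=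
  (box c L).filter fun j =>
    j.1 - a.1 ∈ Finset.Icc (0 : ℤ) (2 ^ k - 1) ∧ j.2 - a.2 ∈ Finset.Icc (0 : ℤ) (2 ^ k - 1)

/-- `s` is a `2^k × 2^k` square in the box. -/
def IsSqr (c : V) (L k : ℕ) (s : Finset V) : Prop :=
  s.card = min (box c L).card (2 ^ (2 * k)) ∧ ∃ a ∈ box c L, s = sqAt c L k a

/-- `S` is a cover of the support of `ρ` by `2^k × 2^k` squares. -/
def IsCover (c : V) (L k : ℕ) (ρ : V → ℤ) (S : Finset (Finset V)) : Prop :=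
  (∀ s ∈ S, IsSqr c L k s) ∧ ∀ j ∈ suppF c L ρ, ∃ s ∈ S, j ∈ s

/-- `S` is a minimal cover of the support of `ρ` by `2^k × 2^k` squares. -/
def IsMinCover (c : V) (L k : ℕ) (ρ : V → ℤ) (S : Finset (Finset V)) : Prop :=
  IsCover c L k ρ S ∧ ∀ S' : Finset (Finset V), IsCover c L k ρ S' → S.card ≤ S'.card

/-- `n(ρ) = ⌈log₂(M d_Λ(ρ)^α)⌉` with `M = 2^16`. -/
def nIdx (c : V) (L : ℕ) (α : ℝ) (ρ : V → ℤ) : ℕ :=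
  ⌈Real.logb 2 ((2 : ℝ) ^ 16 * (dLam c L ρ : ℝ) ^ α)⌉₊

/-- The separated part `S_k^sep(ρ)` of a cover `S` at scale `k ≥ 1`, with `M = 2^16`. -/
def sepOf (c : V) (L k : ℕ) (α : ℝ) (ρ : V → ℤ) (S : Finset (Finset V)) : Finset (Finset V) :=
  if 1 < S.card then
    S.filter fun s => ∀ s' ∈ S, s' ≠ s →
      (2 : ℝ) * 2 ^ 16 * (2 : ℝ) ^ (α * ((k : ℝ) + 1)) ≤ (distFS s s' : ℝ)
  else if Qcharge c L ρ = 0 then ∅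
  else if 2 ^ (k + 1) ≤ distFS (suppF c L ρ) (bdry c L) then S else ∅

end IVGFF

/-!
Interior configurations form the distributive lattice `ℤ^{Λ°}`. If `h₁ ≤ h₂` on `∂Λ`, then
extending `a ⊓ b` by `h₁` and `a ⊔ b` by `h₂` gives the pointwise minimum and maximum of the two
extended fields, and the elementary inequality
`(a ∧ c − b ∧ d)² + (a ∨ c − b ∨ d)² ≤ (a − b)² + (c − d)²` on each edge makes the energy
submodular. Hence the Gibbs weights satisfy Holley's condition, and the four functions theorem,
passed to the limit over finite sets, gives `P_{h₁}(B) ≤ P_{h₂}(B)` for every increasing event `B`.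
All sums converge: by Cauchy–Schwarz along the column below an interior site `j`, the energy
bounds `(g_j − h)²` from the bottom boundary value, so the weight is dominated by a product of
one-dimensional Gaussians.
-/

section FourFunctions

variable {α : Type*} [DistribLattice α]

theorem four_functions_theorem_tsum {f₁ f₂ f₃ f₄ : α → ℝ}
    (h₁ : 0 ≤ f₁) (h₂ : 0 ≤ f₂) (h₃ : 0 ≤ f₃) (h₄ : 0 ≤ f₄)
    (hs₁ : Summable f₁) (hs₂ : Summable f₂) (hs₃ : Summable f₃) (hs₄ : Summable f₄)
    (h : ∀ a b, f₁ a * f₂ b ≤ f₃ (a ⊓ b) * f₄ (a ⊔ b)) :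
    (∑' a, f₁ a) * ∑' a, f₂ a ≤ (∑' a, f₃ a) * ∑' a, f₄ a := by
  classical
  have hfinite (s : Finset α) :
      (∑ a ∈ s, f₁ a) * ∑ a ∈ s, f₂ a ≤ (∑' a, f₃ a) * ∑' a, f₄ a :=
    (four_functions_theorem f₁ f₂ f₃ f₄ h₁ h₂ h₃ h₄ h s s).trans <|
      mul_le_mul (hs₃.sum_le_tsum _ fun a _ => h₃ a) (hs₄.sum_le_tsum _ fun a _ => h₄ a)
        (Finset.sum_nonneg fun a _ => h₄ a) (tsum_nonneg h₃)
  exact le_of_tendsto' (Filter.Tendsto.mul hs₁.hasSum hs₂.hasSum) hfinite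

theorem holley_tsum_indicator {μ₁ μ₂ : α → ℝ} (h₁ : 0 ≤ μ₁) (h₂ : 0 ≤ μ₂)
    (hs₁ : Summable μ₁) (hs₂ : Summable μ₂) (hμ : ∀ a b, μ₁ a * μ₂ b ≤ μ₁ (a ⊓ b) * μ₂ (a ⊔ b))
    {s t : Set α} (hst : ∀ a b, a ∈ s → a ⊔ b ∈ t) :
    (∑' a, s.indicator μ₁ a) * ∑' a, μ₂ a ≤ (∑' a, μ₁ a) * ∑' a, t.indicator μ₂ a := by
  refine four_functions_theorem_tsum (Set.indicator_nonneg fun a _ => h₁ a) h₂ h₁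
    (Set.indicator_nonneg fun a _ => h₂ a) (hs₁.indicator s) hs₂ hs₁ (hs₂.indicator t)
    fun a b => ?_
  by_cases ha : a ∈ s
  · rw [Set.indicator_of_mem ha, Set.indicator_of_mem (hst a b ha)]
    exact hμ a b
  · rw [Set.indicator_of_notMem ha, zero_mul]
    exact mul_nonneg (h₁ _) (Set.indicator_nonneg (fun x _ => h₂ x) _)

end FourFunctions

theorem summable_fintype_prod_of_nonneg {ι κ : Type*} [Fintype ι] {f : ι → κ → ℝ}
    (hf : ∀ i, 0 ≤ f i) (hs : ∀ i, Summable (f i)) :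
    Summable fun x : ι → κ => ∏ i, f i (x i) := by
  classical
  refine summable_of_sum_le (c := ∏ i, ∑' b, f i b)
    (fun x => Finset.prod_nonneg fun i _ => hf i (x i)) fun u => ?_
  calc ∑ x ∈ u, ∏ i, f i (x i)
      ≤ ∑ x ∈ Fintype.piFinset fun i => u.image (· i), ∏ i, f i (x i) :=
        Finset.sum_le_sum_of_subset_of_nonneg
          (fun x hx => Fintype.mem_piFinset.2 fun i => Finset.mem_image_of_mem _ hx)
          fun x _ _ => Finset.prod_nonneg fun i _ => hf i (x i)
    _ = ∏ i, ∑ b ∈ u.image (· i), f i b := (Finset.prod_univ_sum _ _).symm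
    _ ≤ ∏ i, ∑' b, f i b :=
        Finset.prod_le_prod (fun i _ => Finset.sum_nonneg fun b _ => hf i b)
          fun i _ => (hs i).sum_le_tsum _ fun b _ => hf i b

theorem summable_exp_neg_mul_int_sub_sq {c : ℝ} (hc : 0 < c) (a : ℝ) :
    Summable fun n : ℤ => Real.exp (-c * (n - a) ^ 2) := by
  refine (HurwitzKernelBounds.summable_f_int 0 (-a) (t := c / Real.pi) (by positivity)).congr
    fun n => ?_
  simp only [HurwitzKernelBounds.f_int, pow_zero, one_mul, ← sub_eq_add_neg]
  congr 1
  field_simp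

theorem min_sub_min_sq_add_max_sub_max_sq_le (a b c d : ℝ) :
    (min a c - min b d) ^ 2 + (max a c - max b d) ^ 2 ≤ (a - b) ^ 2 + (c - d) ^ 2 := by
  rcases le_total a c with h | h <;> rcases le_total b d with h' | h' <;>
    simp only [min_eq_left, min_eq_right, max_eq_left, max_eq_right, h, h'] <;>
    nlinarith

namespace IVGFF

variable {c : V} {L : ℕ}

lemma mem_box_iff {j : V} :
    j ∈ box c L ↔ c.1 ≤ j.1 ∧ j.1 ≤ c.1 + L - 1 ∧ c.2 ≤ j.2 ∧ j.2 ≤ c.2 + L - 1 := by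
  simp [box, and_assoc]

lemma mem_bdry_iff {j : V} :
    j ∈ bdry c L ↔ j ∈ box c L ∧
      (j.1 = c.1 ∨ j.1 = c.1 + L - 1 ∨ j.2 = c.2 ∨ j.2 = c.2 + L - 1) :=
  Finset.mem_filter

lemma intr_subset_box : intr c L ⊆ box c L := Finset.sdiff_subset

abbrev InteriorField (c : V) (L : ℕ) : Type := intr c L → ℤ

def extendInt (c : V) (L : ℕ) (h : V → ℤ) (φ : InteriorField c L) : V → ℤ :=
  fun j => if hj : j ∈ intr c L then φ ⟨j, hj⟩ else if j ∈ bdry c L then h j else 0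

section Extension

variable {h : V → ℤ}

lemma extendInt_mem (φ : InteriorField c L) : extendInt c L h φ ∈ ivConfigs c L h := by
  refine ⟨fun j hj => ?_, fun j hj => ?_⟩
  · have : j ∉ intr c L := fun hi => (Finset.mem_sdiff.1 hi).2 hj
    simp [extendInt, this, hj]
  · have hi : j ∉ intr c L := fun hi => hj (Finset.mem_sdiff.1 hi).1
    have hb : j ∉ bdry c L := fun hb => hj (Finset.mem_filter.1 hb).1
    simp [extendInt, hi, hb]

lemma extendInt_injective : Function.Injective (extendInt c L h) := fun φ ψ he =>
  funext fun j => by simpa [extendInt, j.2] using congrFun he j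

lemma range_extendInt : Set.range (extendInt c L h) = ivConfigs c L h := by
  refine (Set.range_subset_iff.2 extendInt_mem).antisymm fun g ⟨hgb, hgo⟩ =>
    ⟨fun j => g j, funext fun j => ?_⟩
  by_cases hi : j ∈ intr c L
  · simp [extendInt, hi]
  by_cases hb : j ∈ bdry c L
  · simp [extendInt, hi, hb, hgb j hb]
  · have : j ∉ box c L := fun hj => hi (Finset.mem_sdiff.2 ⟨hj, hb⟩)
    simp [extendInt, hi, hb, hgo j this]

lemma tsum_subtype_eq_tsum_extendInt {S : Set (V → ℤ)} (hS : S ⊆ ivConfigs c L h)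
    (f : (V → ℤ) → ℝ) : ∑' g : S, f g = ∑' φ, S.indicator f (extendInt c L h φ) := by
  rw [tsum_subtype, ← extendInt_injective.tsum_eq]
  exact Set.support_indicator_subset.trans (hS.trans range_extendInt.symm.subset)

lemma ivZ_eq (β : ℝ) : ivZ c L β h = ∑' φ, (ivWeight c L β ∘ extendInt c L h) φ := by
  rw [ivZ, tsum_subtype_eq_tsum_extendInt subset_rfl]
  exact tsum_congr fun φ => Set.indicator_of_mem (extendInt_mem φ) _

lemma ivProb_eq (β : ℝ) (B : Set (V → ℤ)) :
    ivProb c L β h B = (∑' φ, (extendInt c L h ⁻¹' B).indicator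
      (ivWeight c L β ∘ extendInt c L h) φ) / ∑' φ, (ivWeight c L β ∘ extendInt c L h) φ := by
  rw [ivProb, ivZ_eq, tsum_subtype_eq_tsum_extendInt Set.inter_subset_left]
  congr 1
  refine tsum_congr fun φ => ?_
  rw [Set.indicator_comp_right, ← Set.indicator_indicator,
    Set.indicator_of_mem (extendInt_mem φ)]

end Extension

section Lattice

variable {h₁ h₂ : V → ℤ}

lemma extendInt_inf (hle : ∀ j ∈ bdry c L, h₁ j ≤ h₂ j) (a b : InteriorField c L) :
    extendInt c L h₁ (a ⊓ b) = extendInt c L h₁ a ⊓ extendInt c L h₂ b := by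
  funext j
  by_cases hi : j ∈ intr c L
  · simp [extendInt, hi]
  by_cases hb : j ∈ bdry c L
  · simp [extendInt, hi, hb, hle j hb]
  · simp [extendInt, hi, hb]

lemma extendInt_sup (hle : ∀ j ∈ bdry c L, h₁ j ≤ h₂ j) (a b : InteriorField c L) :
    extendInt c L h₂ (a ⊔ b) = extendInt c L h₁ a ⊔ extendInt c L h₂ b := by
  funext j
  by_cases hi : j ∈ intr c L
  · simp [extendInt, hi]
  by_cases hb : j ∈ bdry c L
  · simp [extendInt, hi, hb, hle j hb]
  · simp [extendInt, hi, hb]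

end Lattice

lemma energyI_inf_add_energyI_sup_le (g g' : V → ℤ) :
    energyI c L (g ⊓ g') + energyI c L (g ⊔ g') ≤ energyI c L g + energyI c L g' := by
  simp only [energyI, ← Finset.sum_add_distrib, Pi.inf_apply, Pi.sup_apply, Int.cast_min,
    Int.cast_max]
  exact Finset.sum_le_sum fun p _ => min_sub_min_sq_add_max_sub_max_sq_le _ _ _ _

lemma ivWeight_pos {β : ℝ} {g : V → ℤ} : 0 < ivWeight c L β g := Real.exp_pos _

lemma ivWeight_mul_le {β : ℝ} (hβ : 0 ≤ β) (g g' : V → ℤ) :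
    ivWeight c L β g * ivWeight c L β g' ≤
      ivWeight c L β (g ⊓ g') * ivWeight c L β (g ⊔ g') := by
  simp only [ivWeight, ← Real.exp_add, Real.exp_le_exp]
  nlinarith [energyI_inf_add_energyI_sup_le (c := c) (L := L) g g']

lemma vertical_edge_mem {x y : ℤ} (hx : c.1 ≤ x ∧ x ≤ c.1 + L - 1) (hy : c.2 ≤ y)
    (hy' : y + 1 ≤ c.2 + L - 1) : ((x, y), (x, y + 1)) ∈ edges c L := by
  simp only [edges, Finset.mem_filter, Finset.mem_product, mem_box_iff]
  refine ⟨⟨⟨hx.1, hx.2, hy, by omega⟩, ⟨hx.1, hx.2, by omega, hy'⟩⟩, ?_, by simp⟩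
  simp [adj]

lemma sum_sq_vertical_le_energyI (g : V → ℤ) {x : ℤ} (hx : c.1 ≤ x ∧ x ≤ c.1 + L - 1) {m : ℕ}
    (hm : (m : ℤ) < L) :
    ∑ t ∈ Finset.range m, ((g (x, c.2 + (t + 1 : ℕ)) : ℝ) - g (x, c.2 + t)) ^ 2
      ≤ energyI c L g := by
  set e : ℕ → V × V := fun t => ((x, c.2 + t), (x, c.2 + t + 1))
  have he : Set.InjOn e (Finset.range m) := fun a _ b _ hab => by
    simpa [e] using congrArg (fun p : V × V => p.1.2) hab
  calc ∑ t ∈ Finset.range m, ((g (x, c.2 + (t + 1 : ℕ)) : ℝ) - g (x, c.2 + t)) ^ 2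
      = ∑ p ∈ (Finset.range m).image e, ((g p.1 : ℝ) - g p.2) ^ 2 := by
        rw [Finset.sum_image he]
        refine Finset.sum_congr rfl fun t _ => ?_
        simp only [e, Nat.cast_succ, add_assoc, sq]
        ring
    _ ≤ energyI c L g := by
        refine Finset.sum_le_sum_of_subset_of_nonneg (fun p hp => ?_) fun _ _ _ => sq_nonneg _
        obtain ⟨t, ht, rfl⟩ := Finset.mem_image.1 hp
        have : (t : ℤ) < m := by exact_mod_cast Finset.mem_range.1 ht
        exact vertical_edge_mem hx (by omega) (by omega)

lemma sq_sub_le_mul_energyI {g h : V → ℤ} (hg : ∀ j ∈ bdry c L, g j = h j) {j : V}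
    (hj : j ∈ intr c L) : ((g j : ℝ) - h (j.1, c.2)) ^ 2 ≤ L * energyI c L g := by
  obtain ⟨hx₀, hx₁, hy₀, hy₁⟩ := mem_box_iff.1 (intr_subset_box hj)
  set m := (j.2 - c.2).toNat
  have hm : (m : ℤ) = j.2 - c.2 := Int.toNat_of_nonneg (by omega)
  set f : ℕ → ℝ := fun t => g (j.1, c.2 + t)
  have hbottom : (j.1, c.2) ∈ bdry c L :=
    mem_bdry_iff.2 ⟨mem_box_iff.2 ⟨hx₀, hx₁, le_rfl, by omega⟩, by simp⟩
  have htelescope : ∑ t ∈ Finset.range m, (f (t + 1) - f t) = (g j : ℝ) - h (j.1, c.2) := by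
    rw [Finset.sum_range_sub]
    simp [f, hm, ← hg _ hbottom]
  have hmL : (m : ℝ) ≤ L := by exact_mod_cast (by omega : (m : ℤ) ≤ L)
  calc ((g j : ℝ) - h (j.1, c.2)) ^ 2
      = (∑ t ∈ Finset.range m, (f (t + 1) - f t)) ^ 2 := by rw [htelescope]
    _ ≤ m * ∑ t ∈ Finset.range m, (f (t + 1) - f t) ^ 2 := by
        simpa using
          sq_sum_le_card_mul_sum_sq (s := Finset.range m) (f := fun t => f (t + 1) - f t)
    _ ≤ L * energyI c L g :=
        mul_le_mul hmL (sum_sq_vertical_le_energyI g ⟨hx₀, hx₁⟩ (by omega))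
          (Finset.sum_nonneg fun _ _ => sq_nonneg _) (Nat.cast_nonneg L)

lemma ivWeight_le_prod {β : ℝ} (hβ : 0 ≤ β) {g h : V → ℤ} (hg : ∀ j ∈ bdry c L, g j = h j) :
    ivWeight c L β g ≤ ∏ j ∈ intr c L,
      Real.exp (-(β / (2 * (intr c L).card * L)) * ((g j : ℝ) - h (j.1, c.2)) ^ 2) := by
  set N : ℝ := ((intr c L).card : ℝ)
  have hsum : ∑ j ∈ intr c L, ((g j : ℝ) - h (j.1, c.2)) ^ 2 ≤ N * (L * energyI c L g) := by
    simpa [N] using Finset.sum_le_card_nsmul _ _ _ fun j hj => sq_sub_le_mul_energyI hg hj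
  rw [ivWeight, ← Real.exp_sum, Real.exp_le_exp, ← Finset.mul_sum, neg_mul, neg_mul,
    neg_le_neg_iff]
  -- `N * L = 0` iff the interior is empty, and then the constant is the junk value `β / 0 = 0`.
  rcases eq_or_ne (N * L) 0 with hNL | hNL
  · rw [mul_assoc 2, hNL, mul_zero, div_zero, zero_mul]
    exact mul_nonneg (by positivity) (Finset.sum_nonneg fun _ _ => sq_nonneg _)
  calc β / (2 * N * L) * ∑ j ∈ intr c L, ((g j : ℝ) - h (j.1, c.2)) ^ 2
      ≤ β / (2 * N * L) * (N * (L * energyI c L g)) := by gcongr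
    _ = β / 2 * energyI c L g := by
        obtain ⟨hN, hL⟩ := mul_ne_zero_iff.1 hNL
        field_simp

lemma summable_ivWeight_comp_extendInt {β : ℝ} (hβ : 0 < β) (h : V → ℤ) :
    Summable (ivWeight c L β ∘ extendInt c L h) := by
  set κ := β / (2 * (intr c L).card * L)
  have hκ (j : intr c L) : 0 < κ := by
    have hL : 0 < L := by have := mem_box_iff.1 (intr_subset_box j.2); omega
    have hN : 0 < (intr c L).card := Finset.card_pos.2 ⟨j, j.2⟩
    positivity
  refine Summable.of_nonneg_of_le (fun φ => ivWeight_pos.le) (fun φ => ?_)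
    (summable_fintype_prod_of_nonneg (fun j n => (Real.exp_pos _).le)
      fun j => summable_exp_neg_mul_int_sub_sq (hκ j) (h ((j : V).1, c.2)))
  refine (ivWeight_le_prod hβ.le (extendInt_mem φ).1).trans_eq ?_
  rw [← Finset.prod_coe_sort]
  refine Finset.prod_congr rfl fun j _ => ?_
  simp [extendInt, j.2, κ]

lemma tsum_ivWeight_comp_extendInt_pos {β : ℝ} (hβ : 0 < β) (h : V → ℤ) :
    0 < ∑' φ, (ivWeight c L β ∘ extendInt c L h) φ :=
  (summable_ivWeight_comp_extendInt hβ h).tsum_pos (fun _ => ivWeight_pos.le) 0 ivWeight_pos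

lemma ivProb_mono_of_isUpperSet {β : ℝ} (hβ : 0 < β) {h₁ h₂ : V → ℤ}
    (hle : ∀ j ∈ bdry c L, h₁ j ≤ h₂ j) {B : Set (V → ℤ)} (hB : IsUpperSet B) :
    ivProb c L β h₁ B ≤ ivProb c L β h₂ B := by
  rw [ivProb_eq, ivProb_eq, div_le_div_iff₀ (tsum_ivWeight_comp_extendInt_pos hβ h₁)
    (tsum_ivWeight_comp_extendInt_pos hβ h₂),
    mul_comm (∑' φ, (extendInt c L h₂ ⁻¹' B).indicator _ φ)]
  refine holley_tsum_indicator (fun _ => ivWeight_pos.le) (fun _ => ivWeight_pos.le)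
    (summable_ivWeight_comp_extendInt hβ h₁) (summable_ivWeight_comp_extendInt hβ h₂)
    (fun a b => ?_) fun a b ha => ?_
  · rw [extendInt_inf hle, extendInt_sup hle]
    exact ivWeight_mul_le hβ.le _ _
  · exact hB (extendInt_sup hle a b ▸ le_sup_left) ha

end IVGFF

theorem iv_monotonicity_max_min_general (L : ℕ) (β : ℝ) (hβ : 0 < β)
    (x : ℝ) (A : Finset IVGFF.V)
    (h₁ h₂ : IVGFF.V → ℤ) (hle : ∀ j ∈ IVGFF.bdry 0 L, h₁ j ≤ h₂ j) :
    IVGFF.ivProb 0 L β h₁ {m | ∃ j ∈ A, x ≤ (m j : ℝ)} ≤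
        IVGFF.ivProb 0 L β h₂ {m | ∃ j ∈ A, x ≤ (m j : ℝ)} ∧
      IVGFF.ivProb 0 L β h₁ {m | ∀ j ∈ A, -x ≤ (m j : ℝ)} ≤
        IVGFF.ivProb 0 L β h₂ {m | ∀ j ∈ A, -x ≤ (m j : ℝ)} := by
  refine ⟨IVGFF.ivProb_mono_of_isUpperSet hβ hle ?_, IVGFF.ivProb_mono_of_isUpperSet hβ hle ?_⟩
  · rintro m m' hmm' ⟨j, hj, hxj⟩
    exact ⟨j, hj, hxj.trans (Int.cast_le.2 (hmm' j))⟩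
  · intro m m' hmm' hm j hj
    exact (hm j hj).trans (Int.cast_le.2 (hmm' j))

/-- The probabilities that `max_{j∈A} m_j ≥ x` and that
`min_{j∈A} m_j ≥ −x` are increasing in the boundary condition of the IV-GFF. -/
theorem iv_monotonicity_max_min (L : ℕ) (hL : 2 < L) (β : ℝ) (hβ : 0 < β)
    (x : ℝ) (hx : 0 < x) (A : Finset IVGFF.V) (hA : A.Nonempty)
    (hAsub : A ⊆ IVGFF.box 0 L)
    (h₁ h₂ : IVGFF.V → ℤ) (hle : ∀ j ∈ IVGFF.bdry 0 L, h₁ j ≤ h₂ j) :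
    IVGFF.ivProb 0 L β h₁ {m | ∃ j ∈ A, x ≤ (m j : ℝ)} ≤
        IVGFF.ivProb 0 L β h₂ {m | ∃ j ∈ A, x ≤ (m j : ℝ)} ∧
      IVGFF.ivProb 0 L β h₁ {m | ∀ j ∈ A, -x ≤ (m j : ℝ)} ≤
        IVGFF.ivProb 0 L β h₂ {m | ∀ j ∈ A, -x ≤ (m j : ℝ)} :=
  iv_monotonicity_max_min_general L β hβ x A h₁ h₂ hle
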